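/- Let $x_0,\ldots,x_t,\beta$ be integers and define $x_\nu:=\beta+\min_{j_1+j_2=\nu-1,\,j_1,j_2\ge 0}(x_{j_1}+x_{j_2})$ for $\nu\ge t+1$. Let $p\in\arg\min_{0\le j\le t}(x_j+\beta)/(j+1)$, and set $y_\nu:=(p+1)(x_\nu+\beta)-(x_p+\beta)(\nu+1)$. Then $y_\nu\ge 0$ for all $\nu\ge 0$, and $y_\nu\le y_{\nu-(p+1)}$ for all $\nu\ge t+1$. -/

import Mathlib

/-!
The affine change of variables `y ν = (p + 1) (x ν + β) - (x p + β) (ν + 1)` turns the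
recurrence for `x` into the pure min-plus recurrence
`y ν = min_{j₁ + j₂ = ν - 1} (y j₁ + y j₂)`, because `ν + 1 = (j₁ + 1) + (j₂ + 1)`
and `z ↦ (p + 1) z` is monotone. The choice of `p` makes `y` nonnegative on `0, …, t`
and `y p = 0`. A min-plus recurrence preserves nonnegativity, and taking `j₁ = p` in the
minimum gives `y ν ≤ y p + y (ν - (p + 1)) = y (ν - (p + 1))`.
-/

open Finset

def IsMinPlusRecursive {α : Type*} [Add α] [LinearOrder α] (t : ℕ) (y : ℕ → α) : Prop :=
  ∀ ν : ℕ, ∀ hν : t + 1 ≤ ν,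
    y ν = (range ν).inf' (nonempty_range_iff.mpr (Nat.ne_zero_of_lt hν))
      (fun j => y j + y (ν - 1 - j))

namespace IsMinPlusRecursive

theorem nonneg {α : Type*} [AddCommMonoid α] [LinearOrder α] [IsOrderedAddMonoid α] {t : ℕ}
    {y : ℕ → α} (hy : IsMinPlusRecursive t y) (hbase : ∀ ν ≤ t, 0 ≤ y ν) (ν : ℕ) :
    0 ≤ y ν := by
  induction ν using Nat.strong_induction_on with
  | _ ν ih =>
    rcases le_or_gt ν t with hν | hν
    · exact hbase ν hν
    · rw [hy ν hν]
      exact le_inf' _ _ fun j hj =>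
        add_nonneg (ih j (mem_range.mp hj)) (ih _ (by omega))

theorem le_apply_sub_of_eq_zero {α : Type*} [AddZeroClass α] [LinearOrder α]
    {t : ℕ} {y : ℕ → α} (hy : IsMinPlusRecursive t y) {p ν : ℕ} (hp : y p = 0)
    (hpν : p < ν) (hν : t + 1 ≤ ν) : y ν ≤ y (ν - (p + 1)) := by
  rw [hy ν hν]
  calc _ ≤ y p + y (ν - 1 - p) := inf'_le _ (mem_range.mpr hpν)
    _ = y (ν - (p + 1)) := by rw [hp, zero_add, Nat.sub_sub, Nat.add_comm 1 p]

end IsMinPlusRecursive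

theorem isMinPlusRecursive_affine {t : ℕ} {β : ℤ} {x : ℕ → ℤ}
    (hx : ∀ ν : ℕ, ∀ hν : t + 1 ≤ ν,
      x ν = β + (range ν).inf' (nonempty_range_iff.mpr (Nat.ne_zero_of_lt hν))
        (fun j => x j + x (ν - 1 - j)))
    {a : ℤ} (ha : 0 ≤ a) (c : ℤ) :
    IsMinPlusRecursive t (fun ν => a * (x ν + β) - c * (ν + 1)) := by
  intro ν hν
  let g : ℤ → ℤ := fun z => a * (β + z + β) - c * (ν + 1)
  have hg : Monotone g := fun z w hzw => by simp only [g]; gcongr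
  dsimp only
  rw [hx ν hν]
  change g _ = _
  rw [apply_inf'_eq_inf'_comp _ g fun _ _ => hg.map_inf _ _]
  refine inf'_congr _ rfl fun j hj => ?_
  have hk : ((ν - 1 - j : ℕ) : ℤ) = ν - 1 - j := by have := mem_range.mp hj; omega
  simp only [g, Function.comp_apply, hk]
  ring

theorem stmt19 (t : ℕ) (β : ℤ) (x : ℕ → ℤ)
    (hrec : ∀ ν : ℕ, ∀ _hν : t + 1 ≤ ν,
      x ν = β + (Finset.range ν).inf' (Finset.nonempty_range_iff.mpr (by omega))
        (fun j => x j + x (ν - 1 - j)))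
    (p : ℕ) (hp : p ≤ t)
    (hmin : ∀ j : ℕ, j ≤ t → ((x p : ℚ) + β) / (p + 1) ≤ ((x j : ℚ) + β) / (j + 1))
    (y : ℕ → ℤ)
    (hy : ∀ ν : ℕ, y ν = (p + 1) * (x ν + β) - (x p + β) * (ν + 1)) :
    (∀ ν : ℕ, 0 ≤ y ν) ∧ (∀ ν : ℕ, t + 1 ≤ ν → y ν ≤ y (ν - (p + 1))) := by
  have hrec_y : IsMinPlusRecursive t y :=
    funext hy ▸ isMinPlusRecursive_affine hrec (by positivity) _
  have hbase : ∀ ν ≤ t, 0 ≤ y ν := by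
    intro ν hν
    have h := hmin ν hν
    rw [div_le_div_iff₀ (by positivity) (by positivity)] at h
    rw [hy, sub_nonneg]
    exact_mod_cast (by linarith : ((x p : ℚ) + β) * (ν + 1) ≤ ((p : ℚ) + 1) * (x ν + β))
  have hyp : y p = 0 := by rw [hy]; ring
  exact ⟨hrec_y.nonneg hbase,
    fun ν hν => hrec_y.le_apply_sub_of_eq_zero hyp (by omega) hν⟩
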